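/- arXiv:1911.09547 — 2 statements merged into one kernel-verified Lean document; each statement's English description precedes it below -/
import Mathlib

section
/- Let D = (V,A) be a finite digraph all of whose connected components are strongly connected (a totally cyclic digraph), and let e = {(u,v),(v,u)} ⊆ A be a digon (a pair of antiparallel arcs). Then e is redundant for cyclicity (i.e., D with both arcs of e removed is still totally cyclic) whenever both arcs (u,v) and (v,u) lie on directed cycles of length at least 3 in D. -/
/-- Weak reachability: reachability in the underlying undirected graph of the arc set. -/
def weakReach {V : Type*} (A : Set (V × V)) : V → V → Prop :=
  Relation.ReflTransGen (fun u v => (u, v) ∈ A ∨ (v, u) ∈ A)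

/-- Directed reachability along arcs of `A`. -/
def strongReach {V : Type*} (A : Set (V × V)) : V → V → Prop :=
  Relation.ReflTransGen (fun u v => (u, v) ∈ A)

/-- A digraph (given by its arc set `A`) is totally cyclic if every weakly connected
component is strongly connected. -/
def TotallyCyclic {V : Type*} (A : Set (V × V)) : Prop :=
  ∀ u v, weakReach A u v → strongReach A u v

/-- `IsDiCycleFrom A v l` : the vertex sequence `v, l₁, …, lₙ, v` is a directed cycle
of the digraph with arc set `A` (consecutive vertices joined by arcs, distinct vertices). -/
def IsDiCycleFrom {V : Type*} (A : Set (V × V)) (v : V) (l : List V) : Prop :=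
  List.Chain (fun a b => (a, b) ∈ A) v (l ++ [v]) ∧ (v :: l).Nodup

/-!
Removing the digon only destroys arcs between `u` and `v`, and each of them is bypassed in
`A \ {(u, v), (v, u)}`: the rest of a cycle of length at least 3 through `(u, v)` is a path from
`v` to `u` that never uses an arc between `u` and `v`, and symmetrically. Hence directed
reachability is unchanged, while weak reachability can only shrink.
-/

section

variable {V : Type*}

theorem TotallyCyclic.of_subset_of_forall_arc {A B : Set (V × V)} (hA : TotallyCyclic A)
    (hBA : B ⊆ A) (harc : ∀ a b, (a, b) ∈ A → strongReach B a b) : TotallyCyclic B := by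
  intro x y hxy
  have hweak : weakReach A x y :=
    Relation.ReflTransGen.mono (fun _ _ => Or.imp (@hBA _) (@hBA _)) _ _ hxy
  exact Relation.ReflTransGen.lift' id harc _ _ (hA x y hweak)

theorem strongReach_sdiff_digon_of_isChain {A : Set (V × V)} {u v : V} {l : List V}
    (hl : l.IsChain (fun x y => (x, y) ∈ A)) (hne : l ≠ []) (hv : v ∉ l) :
    strongReach (A \ {(u, v), (v, u)}) (l.head hne) (l.getLast hne) := by
  refine List.relationReflTransGen_of_exists_isChain l (hl.imp_of_mem_imp ?_) hne
  intro x y hx hy hxy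
  have hxv : x ≠ v := ne_of_mem_of_not_mem hx hv
  have hyv : y ≠ v := ne_of_mem_of_not_mem hy hv
  exact ⟨hxy, by simp [hxv, hyv]⟩

theorem strongReach_sdiff_digon_of_isDiCycleFrom {A : Set (V × V)} {u v : V} {l : List V}
    (hcyc : IsDiCycleFrom A u (v :: l)) (hl : l ≠ []) :
    strongReach (A \ {(u, v), (v, u)}) v u := by
  obtain ⟨w, t, rfl⟩ := List.exists_cons_of_ne_nil hl
  obtain ⟨hchain, hnodup⟩ := hcyc
  replace hchain : (u :: v :: w :: (t ++ [u])).IsChain (fun x y => (x, y) ∈ A) := hchain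
  obtain ⟨-, hchain⟩ := List.isChain_cons_cons.mp hchain
  obtain ⟨hvw, hrest⟩ := List.isChain_cons_cons.mp hchain
  simp only [List.nodup_cons, List.mem_cons, not_or] at hnodup
  obtain ⟨⟨hne_uv, hne_uw, -⟩, ⟨hne_vw, hv_t⟩, -⟩ := hnodup
  have hwu : strongReach (A \ {(u, v), (v, u)}) w u := by
    simpa using strongReach_sdiff_digon_of_isChain (u := u) (v := v) hrest (List.cons_ne_nil _ _)
      (by simp [hne_vw, hv_t, Ne.symm hne_uv])
  refine Relation.ReflTransGen.head ⟨hvw, ?_⟩ hwu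
  simp [Ne.symm hne_uv, Ne.symm hne_uw]

end

theorem stmt_4_general {V : Type*} (A : Set (V × V)) (u v : V)
    (htc : TotallyCyclic A)
    (hcyc1 : ∃ l : List V, IsDiCycleFrom A u (v :: l) ∧ l ≠ [])
    (hcyc2 : ∃ l : List V, IsDiCycleFrom A v (u :: l) ∧ l ≠ []) :
    TotallyCyclic (A \ {(u, v), (v, u)}) := by
  obtain ⟨l₁, hcyc₁, hl₁⟩ := hcyc1
  obtain ⟨l₂, hcyc₂, hl₂⟩ := hcyc2
  have hvu : strongReach (A \ {(u, v), (v, u)}) v u :=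
    strongReach_sdiff_digon_of_isDiCycleFrom hcyc₁ hl₁
  have huv : strongReach (A \ {(u, v), (v, u)}) u v := by
    simpa only [Set.pair_comm] using strongReach_sdiff_digon_of_isDiCycleFrom hcyc₂ hl₂
  refine htc.of_subset_of_forall_arc Set.sdiff_subset fun a b hab => ?_
  by_cases hdigon : (a, b) ∈ ({(u, v), (v, u)} : Set (V × V))
  · rcases hdigon with h | h <;> simp only [Set.mem_singleton_iff, Prod.mk.injEq] at h <;>
      obtain ⟨rfl, rfl⟩ := h
    exacts [huv, hvu]
  · exact .single ⟨hab, hdigon⟩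

/-- In a finite totally cyclic digraph, a digon `{(u,v),(v,u)}` is redundant
for cyclicity whenever both of its arcs lie on directed cycles of length at least 3. -/
theorem stmt_4 {V : Type*} [Fintype V] (A : Set (V × V)) (u v : V)
    (htc : TotallyCyclic A)
    (huv : (u, v) ∈ A) (hvu : (v, u) ∈ A) (hne : u ≠ v)
    (hcyc1 : ∃ l : List V, IsDiCycleFrom A u (v :: l) ∧ l ≠ [])
    (hcyc2 : ∃ l : List V, IsDiCycleFrom A v (u :: l) ∧ l ≠ []) :
    TotallyCyclic (A \ {(u, v), (v, u)}) :=
  stmt_4_general A u v htc hcyc1 hcyc2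
end

section
/- Let D = (V,A) be a finite digraph and k ≥ 1. Vertex colorings c : V → {1,…,k} with no monochromatic directed cycle are in bijection with pairs consisting of (a choice of one color value in each weakly connected component at a fixed representative vertex) and (a ℤ_k-coflow g on D whose support contains a feedback arc set). Consequently, the number of acyclic k-colorings equals k^{c(D)} times the number of such NL-ℤ_k-coflows. -/
/-- A coloring is acyclic (Neumann-Lara) if no directed cycle is monochromatic. -/
def AcyclicColoring {V : Type*} {k : ℕ} (A : Set (V × V)) (c : V → ZMod k) : Prop :=
  ∀ (v : V) (l : List V), IsDiCycleFrom A v l → ¬ (∀ u ∈ v :: l, c u = c v)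

/-- An NL-`ℤ_k`-coflow: a coflow (tension) whose support contains a feedback arc set. -/
def IsNLCoflow {V : Type*} {k : ℕ} (A : Finset (V × V)) (g : A → ZMod k) : Prop :=
  (∃ p : V → ZMod k, ∀ a : A, g a = p (a : V × V).1 - p (a : V × V).2) ∧
    ∃ S ⊆ (A : Set (V × V)), (∀ a : A, (a : V × V) ∈ S → g a ≠ 0) ∧
      ∀ (v : V) (l : List V), ¬ IsDiCycleFrom ((A : Set (V × V)) \ S) v l

/-! Two colorings with the same coflow differ by a function that is constant along arcs, hence on
weak components; so a coloring is determined by its coflow and its values at one representative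
per component, and every coflow with every choice of these values arises. Acyclicity depends only
on the coflow: if no directed cycle is monochromatic, the arcs with nonzero coflow form a feedback
arc set, and conversely a monochromatic cycle would avoid the support of the coflow. -/

section Coflow

variable {V G : Type*} [AddCommGroup G]

def coflowOf (A : Finset (V × V)) (c : V → G) : A → G :=
  fun a => c (a : V × V).1 - c (a : V × V).2

def IsCoflow (A : Finset (V × V)) (g : A → G) : Prop :=
  ∃ p : V → G, ∀ a : A, g a = p (a : V × V).1 - p (a : V × V).2

lemma isCoflow_coflowOf (A : Finset (V × V)) (c : V → G) : IsCoflow A (coflowOf A c) :=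
  ⟨c, fun _ => rfl⟩

lemma weakReach_equivalence (A : Set (V × V)) : Equivalence (weakReach A) where
  refl _ := Relation.ReflTransGen.refl
  symm h := (@Relation.ReflTransGen.stdSymm _ _ ⟨fun _ _ => Or.symm⟩).symm _ _ h
  trans := Relation.ReflTransGen.trans

lemma weakReach_out_mk (A : Set (V × V)) (v : V) : weakReach A v (Quot.mk (weakReach A) v).out :=
  (weakReach_equivalence A).eqvGen_iff.mp (Quot.eqvGen_exact (Quot.out_eq _).symm)

lemma sub_eq_sub_of_weakReach {A : Finset (V × V)} {c c' : V → G}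
    (h : coflowOf A c = coflowOf A c') {u v : V} (huv : weakReach (A : Set (V × V)) u v) :
    c u - c' u = c v - c' v := by
  have harc : ∀ x ∈ A, c x.1 - c' x.1 = c x.2 - c' x.2 := fun x hx =>
    sub_eq_sub_iff_sub_eq_sub.mp (congrFun h ⟨x, hx⟩)
  induction huv with
  | refl => rfl
  | tail _ hstep ih =>
    rcases hstep with hs | hs
    · exact ih.trans (harc _ hs)
    · exact ih.trans (harc _ hs).symm

lemma eq_of_coflowOf_eq_of_out_eq {A : Finset (V × V)} {c c' : V → G}
    (h : coflowOf A c = coflowOf A c')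
    (hout : ∀ q : Quot (weakReach (A : Set (V × V))), c q.out = c' q.out) : c = c' := by
  funext v
  have := sub_eq_sub_of_weakReach h (weakReach_out_mk _ v)
  rw [hout, sub_self] at this
  exact sub_eq_zero.mp this

namespace IsCoflow

variable {A : Finset (V × V)} {g : A → G}

noncomputable def normalizedPotential (hg : IsCoflow A g)
    (f : Quot (weakReach (A : Set (V × V))) → G) : V → G :=
  fun v => hg.choose v - hg.choose (Quot.mk (weakReach (A : Set (V × V))) v).out +
    f (Quot.mk _ v)

lemma coflowOf_normalizedPotential (hg : IsCoflow A g)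
    (f : Quot (weakReach (A : Set (V × V))) → G) :
    coflowOf A (hg.normalizedPotential f) = g := by
  funext a
  have hmk : Quot.mk (weakReach (A : Set (V × V))) (a : V × V).1 = Quot.mk _ (a : V × V).2 :=
    Quot.sound (Relation.ReflTransGen.single (Or.inl a.2))
  simp only [coflowOf, normalizedPotential, hmk, hg.choose_spec a]
  abel

lemma normalizedPotential_out (hg : IsCoflow A g)
    (f : Quot (weakReach (A : Set (V × V))) → G) (q : Quot (weakReach (A : Set (V × V)))) :
    hg.normalizedPotential f q.out = f q := by
  simp only [normalizedPotential, Quot.out_eq, sub_self, zero_add]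

end IsCoflow

noncomputable def subtypeEquivComponentsCoflow (A : Finset (V × V)) {P : (V → G) → Prop}
    {Q : (A → G) → Prop} (hPQ : ∀ c, P c ↔ Q (coflowOf A c))
    (hQ : ∀ g, Q g → IsCoflow A g) :
    {c // P c} ≃ (Quot (weakReach (A : Set (V × V))) → G) × {g // Q g} where
  toFun c := (fun q => c.1 q.out, ⟨coflowOf A c, (hPQ c).mp c.2⟩)
  invFun x := ⟨(hQ _ x.2.2).normalizedPotential x.1, (hPQ _).mpr <| by
    rw [IsCoflow.coflowOf_normalizedPotential]
    exact x.2.2⟩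
  left_inv c := Subtype.ext <| eq_of_coflowOf_eq_of_out_eq
    (IsCoflow.coflowOf_normalizedPotential _ _) (IsCoflow.normalizedPotential_out _ _)
  right_inv x := Prod.ext (funext (IsCoflow.normalizedPotential_out _ _))
    (Subtype.ext (IsCoflow.coflowOf_normalizedPotential _ _))

end Coflow

lemma acyclicColoring_iff_isNLCoflow {V : Type*} {k : ℕ} (A : Finset (V × V))
    (c : V → ZMod k) :
    AcyclicColoring (A : Set (V × V)) c ↔ IsNLCoflow A (coflowOf A c) := by
  constructor
  · intro hc
    refine ⟨isCoflow_coflowOf A c, {x | x ∈ A ∧ c x.1 ≠ c x.2}, fun x hx => hx.1,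
      fun a ha => sub_ne_zero.mpr ha.2, ?_⟩
    rintro v l ⟨hchain, hnd⟩
    have hmono : ∀ u ∈ l ++ [v], c u = c v :=
      List.IsChain.cons_induction (fun u => c u = c v) _ hchain
        (fun x y hxy hx => (of_not_not fun hne => hxy.2 ⟨hxy.1, hne⟩ : c x = c y).symm.trans hx)
        rfl
    refine hc v l ⟨List.IsChain.imp (fun _ _ h => h.1) hchain, hnd⟩ fun u hu => ?_
    rcases List.mem_cons.mp hu with rfl | hu
    · rfl
    · exact hmono u (List.mem_append_left _ hu)
  · rintro ⟨-, S, -, hS, hacyclic⟩ v l ⟨hchain, hnd⟩ hmono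
    have hmono' : ∀ u ∈ v :: (l ++ [v]), c u = c v := by
      simpa [or_comm] using hmono
    refine hacyclic v l
      ⟨hchain.imp_of_mem_imp fun x y hx hy hxy => ⟨hxy, fun hxyS => ?_⟩, hnd⟩
    exact hS ⟨_, hxy⟩ hxyS (sub_eq_zero.mpr ((hmono' x hx).trans (hmono' y hy).symm))

theorem stmt_14_general {V : Type*} [Fintype V] (A : Finset (V × V)) (k : ℕ) :
    Nonempty ({c : V → ZMod k // AcyclicColoring (A : Set (V × V)) c} ≃
        (Quot (weakReach (A : Set (V × V))) → ZMod k) ×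
          {g : A → ZMod k // IsNLCoflow A g}) ∧
      Nat.card {c : V → ZMod k // AcyclicColoring (A : Set (V × V)) c} =
        k ^ (Nat.card (Quot (weakReach (A : Set (V × V))))) *
          Nat.card {g : A → ZMod k // IsNLCoflow A g} := by
  let e := subtypeEquivComponentsCoflow A (acyclicColoring_iff_isNLCoflow (k := k) A)
    fun _ hg => hg.1
  exact ⟨⟨e⟩, by rw [Nat.card_congr e, Nat.card_prod, Nat.card_fun, Nat.card_zmod]⟩

/-- Acyclic `k`-colorings of a finite digraph are in bijection with pairs
of a choice of one color per weakly connected component and an NL-`ℤ_k`-coflow; hence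
their number is `k^{c(D)}` times the number of NL-`ℤ_k`-coflows. -/
theorem stmt_14 {V : Type*} [Fintype V] (A : Finset (V × V)) (k : ℕ) (hk : 1 ≤ k) :
    Nonempty ({c : V → ZMod k // AcyclicColoring (A : Set (V × V)) c} ≃
        (Quot (weakReach (A : Set (V × V))) → ZMod k) ×
          {g : A → ZMod k // IsNLCoflow A g}) ∧
      Nat.card {c : V → ZMod k // AcyclicColoring (A : Set (V × V)) c} =
        k ^ (Nat.card (Quot (weakReach (A : Set (V × V))))) *
          Nat.card {g : A → ZMod k // IsNLCoflow A g} :=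
  stmt_14_general A k
end
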